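/- Let A be a 3-dimensional evolution algebra and I a 2-dimensional ideal of A. Then exactly one of the following holds: (1) I is the span of two elements of some natural basis of A; (2) case (1) fails, but there is a natural basis {e_1, e_2, e_3} and distinct indices i, j, k with I = span{e_i, e_j + e_k}, and in this case I is an evolution algebra; (3) neither (1) nor (2) holds, but there is a natural basis {e_1, e_2, e_3} and distinct indices i, j, k with I = span{e_i + e_j, e_j + e_k}; in this last case, if A is perfect (A² = A), then I is not an evolution algebra (has no natural basis as an algebra in itself). -/

import Mathlib

/-!
A two-dimensional ideal `I` of the three-dimensional algebra `A` is the kernel of a linear form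
`φ`, and the zeros of `φ` on a natural basis `e` decide the type of `I`. Two zeros give type (1).
Exactly one zero `φ (e k) = 0` gives type (2): rescale `e i, e j` so that `φ` takes the values
`1, -1` on them, then `I = span {e k, e i + e j}`. No zero gives type (3) after rescaling to the
values `1, -1, 1`.

In type (2) the spanning pair is itself a natural basis of `I`. In type (3), every coordinate is
nonzero on some vector of `I`, and `x * e l = xₗ • e l * e l`, so all `e l * e l`, hence all of
`A²`, lie in `I`: in a perfect algebra type (3) cannot occur.
-/

namespace EvolutionAlgebra

variable {K A : Type*} [Field K] [AddCommGroup A] [Module K A]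

/-- `f` is a natural basis for the multiplication `mul`. -/
def IsNaturalBasis (mul : A →ₗ[K] A →ₗ[K] A) {ι : Type*} (f : Module.Basis ι K A) : Prop :=
  ∀ i j, i ≠ j → mul (f i) (f j) = 0

/-- `I` is the span of two elements of some natural basis. -/
def SpannedByTwoBasisVectors (mul : A →ₗ[K] A →ₗ[K] A) (I : Submodule K A) : Prop :=
  ∃ f : Module.Basis (Fin 3) K A, IsNaturalBasis mul f ∧
    ∃ i j : Fin 3, i ≠ j ∧ I = Submodule.span K {f i, f j}

/-- `I` is the span of `eᵢ` and `eⱼ + eₖ` for some natural basis, with `i, j, k` distinct. -/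
def SpannedTypeTwo (mul : A →ₗ[K] A →ₗ[K] A) (I : Submodule K A) : Prop :=
  ∃ f : Module.Basis (Fin 3) K A, IsNaturalBasis mul f ∧
    ∃ i j k : Fin 3, i ≠ j ∧ j ≠ k ∧ i ≠ k ∧ I = Submodule.span K {f i, f j + f k}

/-- `I` is the span of `eᵢ + eⱼ` and `eⱼ + eₖ` for some natural basis, with `i, j, k` distinct. -/
def SpannedTypeThree (mul : A →ₗ[K] A →ₗ[K] A) (I : Submodule K A) : Prop :=
  ∃ f : Module.Basis (Fin 3) K A, IsNaturalBasis mul f ∧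
    ∃ i j k : Fin 3, i ≠ j ∧ j ≠ k ∧ i ≠ k ∧ I = Submodule.span K {f i + f j, f j + f k}

/-- A two-dimensional ideal is an evolution ideal if, as an algebra on its own,
it has a natural basis. -/
def IsEvolutionIdeal (mul : A →ₗ[K] A →ₗ[K] A) (I : Submodule K A) : Prop :=
  ∃ g : Module.Basis (Fin 2) K ↥I, ∀ i j, i ≠ j → mul (g i : A) (g j : A) = 0

open Module Submodule LinearMap

lemma linearIndependent_pair_of_repr {ι : Type*} (f : Basis ι K A) {x y : A} {l m : ι}
    (hyl : f.repr y l = 0) (hxl : f.repr x l ≠ 0) (hym : f.repr y m ≠ 0) :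
    LinearIndependent K ![x, y] := by
  refine linearIndependent_fin2.mpr ⟨fun hy => hym ?_, fun a hxy => hxl ?_⟩
  · simp [show y = 0 from hy]
  · simp [← show a • y = x from hxy, hyl]

lemma eq_span_pair_of_finrank_eq_two {I : Submodule K A} (hdim : finrank K I = 2) {x y : A}
    (hx : x ∈ I) (hy : y ∈ I) (hxy : LinearIndependent K ![x, y]) : I = span K {x, y} := by
  have : FiniteDimensional K I := Module.finite_of_finrank_eq_succ hdim
  refine (eq_of_le_of_finrank_eq (span_le.mpr ?_) ?_).symm
  · rintro z (rfl | rfl) <;> assumption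
  · rw [← Matrix.range_cons_cons_empty x y ![], finrank_span_eq_card hxy, hdim]
    simp

lemma exists_ker_eq_of_finrank_quotient_eq_one {p : Submodule K A} (hp : finrank K (A ⧸ p) = 1) :
    ∃ φ : A →ₗ[K] K, ker φ = p := by
  have : Module.Finite K (A ⧸ p) := Module.finite_of_finrank_eq_succ hp
  let ψ : (A ⧸ p) ≃ₗ[K] K := LinearEquiv.ofFinrankEq _ _ (by simpa using hp)
  exact ⟨ψ.toLinearMap ∘ₗ p.mkQ, by rw [LinearEquiv.ker_comp, ker_mkQ]⟩

lemma isEvolutionIdeal_span_pair {mul : A →ₗ[K] A →ₗ[K] A} {x y : A}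
    (hxy : LinearIndependent K ![x, y]) (hmul : mul x y = 0) (hmul' : mul y x = 0) :
    IsEvolutionIdeal mul (span K {x, y}) := by
  rw [← Matrix.range_cons_cons_empty x y ![]]
  refine ⟨Basis.span hxy, fun i j hij => ?_⟩
  simp only [Basis.span_apply]
  fin_cases i <;> fin_cases j <;> simp_all

namespace IsNaturalBasis

variable {mul : A →ₗ[K] A →ₗ[K] A} {ι : Type*} {f : Basis ι K A}

lemma isUnitSMul (hf : IsNaturalBasis mul f) {w : ι → K} (hw : ∀ i, IsUnit (w i)) :
    IsNaturalBasis mul (f.isUnitSMul hw) := by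
  intro i j hij
  simp [Basis.isUnitSMul_apply, hf i j hij]

lemma mul_basis_eq [Fintype ι] (hf : IsNaturalBasis mul f) (x : A) (l : ι) :
    mul x (f l) = f.repr x l • mul (f l) (f l) := by
  conv_lhs => rw [← f.sum_repr x]
  rw [map_sum, LinearMap.sum_apply, Finset.sum_eq_single l]
  · simp
  · intro m _ hml
    simp [hf m l hml]
  · simp

lemma mul_mem_of_forall_exists_repr_ne_zero [Fintype ι] (hf : IsNaturalBasis mul f)
    {I : Submodule K A} (hI : ∀ x ∈ I, ∀ y : A, mul x y ∈ I)
    (hsupp : ∀ l, ∃ x ∈ I, f.repr x l ≠ 0) (x y : A) : mul x y ∈ I := by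
  have hsq : ∀ l, mul (f l) (f l) ∈ I := fun l => by
    obtain ⟨z, hz, hzl⟩ := hsupp l
    have := I.smul_mem (f.repr z l)⁻¹ (hI z hz (f l))
    rwa [hf.mul_basis_eq, inv_smul_smul₀ hzl] at this
  rw [← f.sum_repr y, map_sum]
  refine sum_mem fun l _ => ?_
  rw [map_smul, hf.mul_basis_eq]
  exact I.smul_mem _ (I.smul_mem _ (hsq l))

end IsNaturalBasis

lemma SpannedTypeTwo.isEvolutionIdeal {mul : A →ₗ[K] A →ₗ[K] A} {I : Submodule K A}
    (h : SpannedTypeTwo mul I) : IsEvolutionIdeal mul I := by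
  obtain ⟨f, hf, i, j, k, hij, hjk, hik, rfl⟩ := h
  refine isEvolutionIdeal_span_pair
    (linearIndependent_pair_of_repr f (l := i) (m := j) ?_ ?_ ?_) ?_ ?_
  · simp [hij, hik]
  · simp
  · simp [hjk]
  · rw [map_add, hf i j hij, hf i k hik, add_zero]
  · rw [map_add, LinearMap.add_apply, hf j i hij.symm, hf k i hik.symm, add_zero]

lemma SpannedTypeThree.eq_top_of_span_mul_eq_top {mul : A →ₗ[K] A →ₗ[K] A} {I : Submodule K A}
    (h : SpannedTypeThree mul I) (hI : ∀ x ∈ I, ∀ y : A, mul x y ∈ I)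
    (hperf : span K {z : A | ∃ x y : A, z = mul x y} = ⊤) : I = ⊤ := by
  obtain ⟨f, hf, i, j, k, hij, hjk, hik, rfl⟩ := h
  rw [eq_top_iff, ← hperf, span_le]
  rintro _ ⟨x, y, rfl⟩
  refine hf.mul_mem_of_forall_exists_repr_ne_zero hI (fun l => ?_) x y
  have hl : l = i ∨ l = j ∨ l = k := by omega
  rcases hl with rfl | rfl | rfl
  · exact ⟨_, subset_span (.inl rfl), by simp [hij]⟩
  · exact ⟨_, subset_span (.inl rfl), by simp [hij]⟩
  · exact ⟨_, subset_span (.inr rfl), by simp [hjk]⟩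

section Kernel

variable {mul : A →ₗ[K] A →ₗ[K] A} {e : Basis (Fin 3) K A} {φ : A →ₗ[K] K}

lemma spannedByTwoBasisVectors_ker (he : IsNaturalBasis mul e) (hφ : finrank K (ker φ) = 2)
    {j k : Fin 3} (hjk : j ≠ k) (hj : φ (e j) = 0) (hk : φ (e k) = 0) :
    SpannedByTwoBasisVectors mul (ker φ) :=
  ⟨e, he, j, k, hjk, eq_span_pair_of_finrank_eq_two hφ hj hk
    (linearIndependent_pair_of_repr e (l := j) (m := k) (by simp [hjk]) (by simp) (by simp))⟩

lemma spannedTypeTwo_ker (he : IsNaturalBasis mul e) (hφ : finrank K (ker φ) = 2)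
    {i j k : Fin 3} (hij : i ≠ j) (hjk : j ≠ k) (hik : i ≠ k)
    (hi : φ (e i) ≠ 0) (hj : φ (e j) ≠ 0) (hk : φ (e k) = 0) :
    SpannedTypeTwo mul (ker φ) := by
  let w : Fin 3 → K := fun l =>
    if l = i then (φ (e i))⁻¹ else if l = j then -(φ (e j))⁻¹ else 1
  have hw : ∀ l, IsUnit (w l) := fun l => by
    simp only [w]; split_ifs <;> simp [hi, hj]
  let f := e.isUnitSMul hw
  have hfi : f i = (φ (e i))⁻¹ • e i := by simp [f, Basis.isUnitSMul_apply, w]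
  have hfj : f j = -(φ (e j))⁻¹ • e j := by simp [f, Basis.isUnitSMul_apply, w, hij.symm]
  have hfk : f k = e k := by simp [f, Basis.isUnitSMul_apply, w, hik.symm, hjk.symm]
  refine ⟨f, he.isUnitSMul hw, k, i, j, hik.symm, hij, hjk.symm,
    eq_span_pair_of_finrank_eq_two hφ ?_ ?_ (linearIndependent_pair_of_repr f (l := k) (m := i)
      ?_ ?_ ?_)⟩
  · rwa [mem_ker, hfk]
  · simp [hfi, hfj, hi, hj]
  · simp [hik, hjk]
  · simp
  · simp [hij]

lemma spannedTypeThree_ker (he : IsNaturalBasis mul e) (hφ : finrank K (ker φ) = 2)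
    (h0 : φ (e 0) ≠ 0) (h1 : φ (e 1) ≠ 0) (h2 : φ (e 2) ≠ 0) :
    SpannedTypeThree mul (ker φ) := by
  let w : Fin 3 → K := ![(φ (e 0))⁻¹, -(φ (e 1))⁻¹, (φ (e 2))⁻¹]
  have hw : ∀ l, IsUnit (w l) := fun l => by
    fin_cases l <;> simp [w, h0, h1, h2]
  let f := e.isUnitSMul hw
  have hf : ∀ l, φ (f l) = ![1, -1, 1] l := fun l => by
    fin_cases l <;> simp [f, Basis.isUnitSMul_apply, w, h0, h1, h2]
  refine ⟨f, he.isUnitSMul hw, 0, 1, 2, by decide, by decide, by decide,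
    eq_span_pair_of_finrank_eq_two hφ ?_ ?_ (linearIndependent_pair_of_repr f (l := 0) (m := 1)
      ?_ ?_ ?_)⟩
  · simp [hf]
  · simp [hf]
  · simp
  · simp
  · simp

lemma ker_trichotomy (he : IsNaturalBasis mul e) (hφ : finrank K (ker φ) = 2) :
    SpannedByTwoBasisVectors mul (ker φ) ∨ SpannedTypeTwo mul (ker φ) ∨
      SpannedTypeThree mul (ker φ) := by
  by_cases h0 : φ (e 0) = 0 <;> by_cases h1 : φ (e 1) = 0 <;> by_cases h2 : φ (e 2) = 0
  · have hφ0 : φ = 0 := e.ext fun l => by fin_cases l <;> assumption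
    have hA : finrank K A = 3 := by simp [finrank_eq_card_basis e]
    rw [hφ0, ker_zero, finrank_top, hA] at hφ
    omega
  · exact .inl (spannedByTwoBasisVectors_ker he hφ (by decide) h0 h1)
  · exact .inl (spannedByTwoBasisVectors_ker he hφ (by decide) h0 h2)
  · exact .inr (.inl (spannedTypeTwo_ker he hφ (i := 1) (j := 2) (k := 0)
      (by decide) (by decide) (by decide) h1 h2 h0))
  · exact .inl (spannedByTwoBasisVectors_ker he hφ (by decide) h1 h2)
  · exact .inr (.inl (spannedTypeTwo_ker he hφ (i := 0) (j := 2) (k := 1)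
      (by decide) (by decide) (by decide) h0 h2 h1))
  · exact .inr (.inl (spannedTypeTwo_ker he hφ (i := 0) (j := 1) (k := 2)
      (by decide) (by decide) (by decide) h0 h1 h2))
  · exact .inr (.inr (spannedTypeThree_ker he hφ h0 h1 h2))

end Kernel

theorem stmt17_general
    (mul : A →ₗ[K] A →ₗ[K] A)
    (e : Module.Basis (Fin 3) K A) (hnat : IsNaturalBasis mul e)
    (I : Submodule K A) (hI : ∀ x ∈ I, ∀ y : A, mul x y ∈ I)
    (hdim : Module.finrank K I = 2) :
    SpannedByTwoBasisVectors mul I ∨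
      (¬SpannedByTwoBasisVectors mul I ∧ SpannedTypeTwo mul I ∧
        IsEvolutionIdeal mul I) ∨
      (¬SpannedByTwoBasisVectors mul I ∧ ¬SpannedTypeTwo mul I ∧
        SpannedTypeThree mul I ∧
        (Submodule.span K {z : A | ∃ x y : A, z = mul x y} = ⊤ →
          ¬IsEvolutionIdeal mul I)) := by
  have : Module.Finite K A := Module.Finite.of_basis e
  have hA : finrank K A = 3 := by simp [finrank_eq_card_basis e]
  obtain ⟨φ, rfl⟩ := exists_ker_eq_of_finrank_quotient_eq_one (p := I)
    (by have := I.finrank_quotient_add_finrank; omega)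
  by_cases h1 : SpannedByTwoBasisVectors mul (ker φ)
  · exact .inl h1
  by_cases h2 : SpannedTypeTwo mul (ker φ)
  · exact .inr (.inl ⟨h1, h2, h2.isEvolutionIdeal⟩)
  have h3 := ((ker_trichotomy hnat hdim).resolve_left h1).resolve_left h2
  refine .inr (.inr ⟨h1, h2, h3, fun hperf _ => ?_⟩)
  rw [h3.eq_top_of_span_mul_eq_top hI hperf, finrank_top] at hdim
  omega

theorem stmt17
    (mul : A →ₗ[K] A →ₗ[K] A) (hcomm : ∀ x y : A, mul x y = mul y x)
    (e : Module.Basis (Fin 3) K A) (hnat : IsNaturalBasis mul e)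
    (I : Submodule K A) (hI : ∀ x ∈ I, ∀ y : A, mul x y ∈ I)
    (hdim : Module.finrank K I = 2) :
    SpannedByTwoBasisVectors mul I ∨
      (¬SpannedByTwoBasisVectors mul I ∧ SpannedTypeTwo mul I ∧
        IsEvolutionIdeal mul I) ∨
      (¬SpannedByTwoBasisVectors mul I ∧ ¬SpannedTypeTwo mul I ∧
        SpannedTypeThree mul I ∧
        (Submodule.span K {z : A | ∃ x y : A, z = mul x y} = ⊤ →
          ¬IsEvolutionIdeal mul I)) :=
  stmt17_general mul e hnat I hI hdim

end EvolutionAlgebra
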